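/- The antipode S of a co-Frobenius Hopf algebra H over a field k (equivalently, of a Hopf algebra with nonzero left integral) is bijective. -/

import Mathlib

open TensorProduct LinearMap MulOpposite Coalgebra

noncomputable section

/-- The dual algebra `C* = Hom_K(C, K)` of a coalgebra `C`, with the convolution product. -/
def DualAlg (K C : Type) [Field K] [AddCommGroup C] [Module K C] : Type := C →ₗ[K] K

namespace DualAlg

variable (K C : Type) [Field K] [AddCommGroup C] [Module K C]

instance : AddCommGroup (DualAlg K C) := inferInstanceAs (AddCommGroup (C →ₗ[K] K))
instance : Module K (DualAlg K C) := inferInstanceAs (Module K (C →ₗ[K] K))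

variable {K C}

/-- View an element of the dual algebra as a linear map. -/
def toLin (f : DualAlg K C) : C →ₗ[K] K := f

/-- View a linear map as an element of the dual algebra. -/
def ofLin (f : C →ₗ[K] K) : DualAlg K C := f

instance : FunLike (DualAlg K C) C K where
  coe f := f.toLin
  coe_injective := fun _ _ h => DFunLike.coe_injective (F := C →ₗ[K] K) h

@[ext] lemma ext {f g : DualAlg K C} (h : ∀ c, f c = g c) : f = g := DFunLike.ext _ _ h

@[simp] lemma toLin_apply (f : DualAlg K C) (c : C) : f.toLin c = f c := rfl
@[simp] lemma ofLin_apply (f : C →ₗ[K] K) (c : C) : (ofLin f : DualAlg K C) c = f c := rfl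
@[simp] lemma add_apply (f g : DualAlg K C) (c : C) : (f + g) c = f c + g c := rfl
@[simp] lemma zero_apply (c : C) : (0 : DualAlg K C) c = 0 := rfl
@[simp] lemma smul_apply (k : K) (f : DualAlg K C) (c : C) : (k • f) c = k * f c := rfl

variable [Coalgebra K C]

/-- The convolution product on the dual of a coalgebra. -/
def conv (f g : DualAlg K C) : DualAlg K C :=
  ofLin (LinearMap.mul' K K ∘ₗ TensorProduct.map f.toLin g.toLin ∘ₗ Coalgebra.comul)

lemma conv_repr (f g : DualAlg K C) (c : C) {ι : Type*} (r : Coalgebra.Repr K c ι) :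
    conv f g c = ∑ i ∈ r.index, f (r.left i) * g (r.right i) := by
  show LinearMap.mul' K K (TensorProduct.map f.toLin g.toLin (Coalgebra.comul c)) = _
  rw [← r.eq]
  simp [map_sum]

instance : Ring (DualAlg K C) :=
  { (inferInstanceAs (AddCommGroup (DualAlg K C)) : AddCommGroup (DualAlg K C)) with
    mul := conv
    one := ofLin Coalgebra.counit
    mul_assoc := by
      intro f g h
      ext c
      show conv (conv f g) h c = conv f (conv g h) c
      classical
      set r := Coalgebra.Repr.arbitrary K c
      set a₁ : (i : C × C) → Coalgebra.Repr K (r.left i) (C × C) := fun i => Coalgebra.Repr.arbitrary K _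
      set a₂ : (i : C × C) → Coalgebra.Repr K (r.right i) (C × C) := fun i => Coalgebra.Repr.arbitrary K _
      have key := Coalgebra.sum_map_tmul_tmul_eq (f.toLin) (g.toLin) (h.toLin) c
        (repr := r) (a₁ := a₁) (a₂ := a₂)
      have := congrArg (fun z => (LinearMap.mul' K K ∘ₗ (LinearMap.mul' K K).lTensor K) z) key
      simp only [map_sum, LinearMap.coe_comp, Function.comp_apply, LinearMap.lTensor_tmul,
        LinearMap.mul'_apply] at this
      rw [conv_repr _ _ _ r, conv_repr _ _ _ r]
      calc ∑ i ∈ r.index, conv f g (r.left i) * h (r.right i)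
          = ∑ i ∈ r.index, ∑ j ∈ (a₁ i).index,
              f ((a₁ i).left j) * (g ((a₁ i).right j) * h (r.right i)) := by
            refine Finset.sum_congr rfl fun i _ => ?_
            rw [conv_repr _ _ _ (a₁ i), Finset.sum_mul]
            exact Finset.sum_congr rfl fun j _ => mul_assoc _ _ _
        _ = ∑ i ∈ r.index, ∑ j ∈ (a₂ i).index,
              f (r.left i) * (g ((a₂ i).left j) * h ((a₂ i).right j)) := this.symm
        _ = ∑ i ∈ r.index, f (r.left i) * conv g h (r.right i) := by
            refine Finset.sum_congr rfl fun i _ => ?_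
            rw [conv_repr _ _ _ (a₂ i), Finset.mul_sum]
    one_mul := by
      intro f
      ext c
      show conv (ofLin Coalgebra.counit) f c = f c
      classical
      set r := Coalgebra.Repr.arbitrary K c
      have key := Coalgebra.sum_counit_tmul_map_eq (f.toLin) c (repr := r)
      have := congrArg (fun z => LinearMap.mul' K K z) key
      simp only [map_sum, LinearMap.mul'_apply, one_mul] at this
      rw [conv_repr _ _ _ r]
      simpa using this
    mul_one := by
      intro f
      ext c
      show conv f (ofLin Coalgebra.counit) c = f c
      classical
      set r := Coalgebra.Repr.arbitrary K c
      have key := Coalgebra.sum_map_tmul_counit_eq (f.toLin) c (repr := r)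
      have := congrArg (fun z => LinearMap.mul' K K z) key
      simp only [map_sum, LinearMap.mul'_apply, mul_one] at this
      rw [conv_repr _ _ _ r]
      simpa using this
    left_distrib := by
      intro f g h
      ext c
      show conv f (g + h) c = conv f g c + conv f h c
      classical
      set r := Coalgebra.Repr.arbitrary K c
      rw [conv_repr _ _ _ r, conv_repr _ _ _ r, conv_repr _ _ _ r, ← Finset.sum_add_distrib]
      exact Finset.sum_congr rfl fun i _ => by rw [add_apply, mul_add]
    right_distrib := by
      intro f g h
      ext c
      show conv (f + g) h c = conv f h c + conv g h c
      classical
      set r := Coalgebra.Repr.arbitrary K c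
      rw [conv_repr _ _ _ r, conv_repr _ _ _ r, conv_repr _ _ _ r, ← Finset.sum_add_distrib]
      exact Finset.sum_congr rfl fun i _ => by rw [add_apply, add_mul]
    zero_mul := by
      intro f
      ext c
      show conv 0 f c = 0
      classical
      rw [conv_repr _ _ _ (Coalgebra.Repr.arbitrary K c)]
      simp
    mul_zero := by
      intro f
      ext c
      show conv f 0 c = 0
      classical
      rw [conv_repr _ _ _ (Coalgebra.Repr.arbitrary K c)]
      simp }

lemma mul_repr (f g : DualAlg K C) (c : C) {ι : Type*} (r : Coalgebra.Repr K c ι) :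
    (f * g) c = ∑ i ∈ r.index, f (r.left i) * g (r.right i) := conv_repr f g c r

@[simp] lemma one_apply (c : C) : (1 : DualAlg K C) c = Coalgebra.counit c := rfl

instance : Algebra K (DualAlg K C) :=
  Algebra.ofModule
    (fun k f g => by
      ext c
      classical
      rw [show (k • f) * g = conv (k • f) g from rfl, conv_repr _ _ _ (Coalgebra.Repr.arbitrary K c)]
      rw [show k • (f * g) = k • conv f g from rfl]
      rw [smul_apply, conv_repr _ _ _ (Coalgebra.Repr.arbitrary K c), Finset.mul_sum]
      exact Finset.sum_congr rfl fun i _ => by rw [smul_apply]; ring)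
    (fun k f g => by
      ext c
      classical
      rw [show f * (k • g) = conv f (k • g) from rfl, conv_repr _ _ _ (Coalgebra.Repr.arbitrary K c)]
      rw [show k • (f * g) = k • conv f g from rfl]
      rw [smul_apply, conv_repr _ _ _ (Coalgebra.Repr.arbitrary K c), Finset.mul_sum]
      exact Finset.sum_congr rfl fun i _ => by rw [smul_apply]; ring)

end DualAlg

section Actions

variable (K C : Type) [Field K] [AddCommGroup C] [Module K C] [Coalgebra K C]

/-- The right action of the dual algebra on `C`: `c · f = f(c₁) c₂`, coming from the
left comodule structure of `C` over itself. -/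
def ract (f : DualAlg K C) : C →ₗ[K] C :=
  (TensorProduct.lid K C).toLinearMap ∘ₗ (f.toLin.rTensor C) ∘ₗ Coalgebra.comul

/-- The left action of the dual algebra on `C`: `f · c = f(c₂) c₁`, coming from the
right comodule structure of `C` over itself. -/
def lact (f : DualAlg K C) : C →ₗ[K] C :=
  (TensorProduct.rid K C).toLinearMap ∘ₗ (f.toLin.lTensor C) ∘ₗ Coalgebra.comul

variable {K C}

lemma ract_repr (f : DualAlg K C) (c : C) {ι : Type*} (r : Coalgebra.Repr K c ι) :
    ract K C f c = ∑ i ∈ r.index, f (r.left i) • r.right i := by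
  show (TensorProduct.lid K C) (f.toLin.rTensor C (Coalgebra.comul c)) = _
  rw [← r.eq]
  simp [map_sum]

lemma lact_repr (f : DualAlg K C) (c : C) {ι : Type*} (r : Coalgebra.Repr K c ι) :
    lact K C f c = ∑ i ∈ r.index, f (r.right i) • r.left i := by
  show (TensorProduct.rid K C) (f.toLin.lTensor C (Coalgebra.comul c)) = _
  rw [← r.eq]
  simp [map_sum]

variable (K C)

/-- `C` is a right module over its dual algebra (equivalently, a left comodule over itself). -/
instance : Module (DualAlg K C)ᵐᵒᵖ C where
  smul a c := ract K C a.unop c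
  one_smul c := by
    show ract K C 1 c = c
    classical
    set r := Coalgebra.Repr.arbitrary K c
    have key := Coalgebra.sum_counit_tmul_eq r
    have := congrArg (fun z => (TensorProduct.lid K C) z) key
    simp only [map_sum, TensorProduct.lid_tmul] at this
    rw [ract_repr _ _ r]
    simpa using this
  mul_smul a b c := by
    show ract K C (b.unop * a.unop) c = ract K C a.unop (ract K C b.unop c)
    classical
    set g := b.unop
    set f := a.unop
    set r := Coalgebra.Repr.arbitrary K c
    set a₁ : (i : C × C) → Coalgebra.Repr K (r.left i) (C × C) := fun i => Coalgebra.Repr.arbitrary K _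
    set a₂ : (i : C × C) → Coalgebra.Repr K (r.right i) (C × C) := fun i => Coalgebra.Repr.arbitrary K _
    have key := Coalgebra.sum_tmul_tmul_eq r a₁ a₂
    have hmap := congrArg (fun z =>
      (TensorProduct.lid K C)
        ((LinearMap.rTensor C (LinearMap.mul' K K ∘ₗ TensorProduct.map g.toLin f.toLin))
          ((TensorProduct.assoc K C C C).symm z))) key
    simp only [map_sum, TensorProduct.assoc_symm_tmul, LinearMap.rTensor_tmul,
      LinearMap.coe_comp, Function.comp_apply, TensorProduct.map_tmul,
      LinearMap.mul'_apply, TensorProduct.lid_tmul] at hmap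
    rw [ract_repr _ _ r]
    calc ∑ i ∈ r.index, (g * f) (r.left i) • r.right i
        = ∑ i ∈ r.index, ∑ j ∈ (a₁ i).index,
            (g ((a₁ i).left j) * f ((a₁ i).right j)) • r.right i := by
          refine Finset.sum_congr rfl fun i _ => ?_
          rw [DualAlg.mul_repr _ _ _ (a₁ i), Finset.sum_smul]
      _ = ∑ i ∈ r.index, ∑ j ∈ (a₂ i).index,
            (g (r.left i) * f ((a₂ i).left j)) • (a₂ i).right j := hmap
      _ = ract K C f (ract K C g c) := by
          rw [ract_repr g _ r, map_sum]
          refine Finset.sum_congr rfl fun i _ => ?_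
          rw [map_smul, ract_repr f _ (a₂ i), Finset.smul_sum]
          exact Finset.sum_congr rfl fun j _ => by rw [smul_smul]
  smul_zero a := map_zero (ract K C a.unop)
  smul_add a x y := map_add (ract K C a.unop) x y
  add_smul a b c := by
    show ract K C (a.unop + b.unop) c = ract K C a.unop c + ract K C b.unop c
    classical
    set r := Coalgebra.Repr.arbitrary K c
    rw [ract_repr _ _ r, ract_repr _ _ r, ract_repr _ _ r, ← Finset.sum_add_distrib]
    exact Finset.sum_congr rfl fun i _ => by rw [DualAlg.add_apply, add_smul]
  zero_smul c := by
    show ract K C 0 c = 0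
    classical
    rw [ract_repr _ _ (Coalgebra.Repr.arbitrary K c)]
    simp

/-- `C` is a left module over its dual algebra (equivalently, a right comodule over itself). -/
instance : Module (DualAlg K C) C where
  smul f c := lact K C f c
  one_smul c := by
    show lact K C 1 c = c
    classical
    set r := Coalgebra.Repr.arbitrary K c
    have key := Coalgebra.sum_tmul_counit_eq r
    have := congrArg (fun z => (TensorProduct.rid K C) z) key
    simp only [map_sum, TensorProduct.rid_tmul] at this
    rw [lact_repr _ _ r]
    simpa using this
  mul_smul f g c := by
    show lact K C (f * g) c = lact K C f (lact K C g c)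
    classical
    set r := Coalgebra.Repr.arbitrary K c
    set a₁ : (i : C × C) → Coalgebra.Repr K (r.left i) (C × C) := fun i => Coalgebra.Repr.arbitrary K _
    set a₂ : (i : C × C) → Coalgebra.Repr K (r.right i) (C × C) := fun i => Coalgebra.Repr.arbitrary K _
    have key := Coalgebra.sum_tmul_tmul_eq r a₁ a₂
    have hmap := congrArg (fun z =>
      (TensorProduct.rid K C)
        ((LinearMap.lTensor C (LinearMap.mul' K K ∘ₗ TensorProduct.map f.toLin g.toLin)) z)) key
    simp only [map_sum, LinearMap.lTensor_tmul, LinearMap.coe_comp, Function.comp_apply,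
      TensorProduct.map_tmul, LinearMap.mul'_apply, TensorProduct.rid_tmul] at hmap
    rw [lact_repr _ _ r]
    calc ∑ i ∈ r.index, (f * g) (r.right i) • r.left i
        = ∑ i ∈ r.index, ∑ j ∈ (a₂ i).index,
            (f ((a₂ i).left j) * g ((a₂ i).right j)) • r.left i := by
          refine Finset.sum_congr rfl fun i _ => ?_
          rw [DualAlg.mul_repr _ _ _ (a₂ i), Finset.sum_smul]
      _ = ∑ i ∈ r.index, ∑ j ∈ (a₁ i).index,
            (f ((a₁ i).right j) * g (r.right i)) • (a₁ i).left j := hmap.symm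
      _ = lact K C f (lact K C g c) := by
          rw [lact_repr g _ r, map_sum]
          refine Finset.sum_congr rfl fun i _ => ?_
          rw [map_smul, lact_repr f _ (a₁ i), Finset.smul_sum]
          refine Finset.sum_congr rfl fun j _ => ?_
          rw [smul_smul, mul_comm]
  smul_zero f := map_zero (lact K C f)
  smul_add f x y := map_add (lact K C f) x y
  add_smul f g c := by
    show lact K C (f + g) c = lact K C f c + lact K C g c
    classical
    set r := Coalgebra.Repr.arbitrary K c
    rw [lact_repr _ _ r, lact_repr _ _ r, lact_repr _ _ r, ← Finset.sum_add_distrib]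
    exact Finset.sum_congr rfl fun i _ => by rw [DualAlg.add_apply, add_smul]
  zero_smul c := by
    show lact K C 0 c = 0
    classical
    rw [lact_repr _ _ (Coalgebra.Repr.arbitrary K c)]
    simp

lemma op_smul_def (f : DualAlg K C) (c : C) : (MulOpposite.op f) • c = ract K C f c := rfl
lemma smul_def' (f : DualAlg K C) (c : C) : f • c = lact K C f c := rfl

instance : IsScalarTower K (DualAlg K C)ᵐᵒᵖ (DualAlg K C) :=
  ⟨fun k a b => by
    show b * (k • a).unop = k • (b * a.unop)
    rw [MulOpposite.unop_smul, mul_smul_comm]⟩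

instance : IsScalarTower K (DualAlg K C)ᵐᵒᵖ C :=
  ⟨fun k a c => by
    show ract K C (k • a.unop) c = k • ract K C a.unop c
    classical
    set r := Coalgebra.Repr.arbitrary K c
    rw [ract_repr _ _ r, ract_repr _ _ r, Finset.smul_sum]
    exact Finset.sum_congr rfl fun i _ => by rw [DualAlg.smul_apply, mul_smul]⟩

instance : IsScalarTower K (DualAlg K C) C :=
  ⟨fun k f c => by
    show lact K C (k • f) c = k • lact K C f c
    classical
    set r := Coalgebra.Repr.arbitrary K c
    rw [lact_repr _ _ r, lact_repr _ _ r, Finset.smul_sum]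
    exact Finset.sum_congr rfl fun i _ => by rw [DualAlg.smul_apply, mul_smul]⟩

instance : SMulCommClass K (DualAlg K C)ᵐᵒᵖ C :=
  ⟨fun k a c => by
    show k • ract K C a.unop c = ract K C a.unop (k • c)
    rw [map_smul]⟩

instance : SMulCommClass K (DualAlg K C) C :=
  ⟨fun k f c => by
    show k • lact K C f c = lact K C f (k • c)
    rw [map_smul]⟩

instance : SMulCommClass (DualAlg K C)ᵐᵒᵖ (DualAlg K C) (DualAlg K C) :=
  ⟨fun a b c => by
    show (b * c) * a.unop = b * (c * a.unop)
    rw [mul_assoc]⟩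

end Actions

section QcF

variable (K C : Type) [Field K] [AddCommGroup C] [Module K C] [Coalgebra K C]

/-- A coalgebra is right quasi-co-Frobenius if there is a monomorphism of right `C*`-modules
from `C` into a direct sum of copies of `C*`. -/
def RightQcF : Prop :=
  ∃ (I : Type) (f : C →ₗ[(DualAlg K C)ᵐᵒᵖ] (I →₀ DualAlg K C)), Function.Injective f

/-- A coalgebra is left quasi-co-Frobenius if there is a monomorphism of left `C*`-modules
from `C` into a direct sum of copies of `C*`. -/
def LeftQcF : Prop :=
  ∃ (I : Type) (f : C →ₗ[DualAlg K C] (I →₀ DualAlg K C)), Function.Injective f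

/-- A coalgebra is quasi-co-Frobenius if it is both left and right quasi-co-Frobenius. -/
def IsQcF : Prop := LeftQcF K C ∧ RightQcF K C

/-- A coalgebra is right co-Frobenius if there is a monomorphism of right `C*`-modules
from `C` into `C*`. -/
def RightCoFrobenius : Prop :=
  ∃ f : C →ₗ[(DualAlg K C)ᵐᵒᵖ] DualAlg K C, Function.Injective f

/-- A coalgebra is left co-Frobenius if there is a monomorphism of left `C*`-modules
from `C` into `C*`. -/
def LeftCoFrobenius : Prop :=
  ∃ f : C →ₗ[DualAlg K C] DualAlg K C, Function.Injective f

/-- A coalgebra is co-Frobenius if it is both left and right co-Frobenius. -/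
def IsCoFrobenius : Prop := LeftCoFrobenius K C ∧ RightCoFrobenius K C

/-- The finite topology on the dual of a coalgebra: the topology induced from the product
topology on `C → K`, where `K` carries the discrete topology.  A basis of neighbourhoods of `0`
is given by the annihilators `F^⊥` of finite-dimensional subspaces `F ⊆ C`. -/
def finiteTopology : TopologicalSpace (DualAlg K C) :=
  TopologicalSpace.induced (fun f => (f : C → K))
    (@Pi.topologicalSpace C (fun _ => K) (fun _ => ⊥))

end QcF

section Rational

variable (K C : Type) [Field K] [AddCommGroup C] [Module K C] [Coalgebra K C]
variable (M : Type) [AddCommGroup M] [Module K M]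

/-- The contraction `M ⊗ C → M` along a functional `f ∈ C*`: `m ⊗ c ↦ f(c) m`. -/
def cntr (f : DualAlg K C) : M ⊗[K] C →ₗ[K] M :=
  (TensorProduct.rid K M).toLinearMap ∘ₗ (f.toLin.lTensor M)

@[simp] lemma cntr_tmul (f : DualAlg K C) (m : M) (c : C) :
    cntr K C M f (m ⊗ₜ[K] c) = f c • m := by
  simp [cntr]

/-- An element `m` of a right `C*`-module is rational if the action of `C*` on it comes from
a "coaction" `ρ(m) = ∑ xᵢ ⊗ cᵢ ∈ M ⊗ C`, i.e. `m · f = ∑ f(cᵢ) xᵢ` for all `f ∈ C*`. -/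
def IsRatRight [Module (DualAlg K C)ᵐᵒᵖ M] (m : M) : Prop :=
  ∃ z : M ⊗[K] C, ∀ f : DualAlg K C, (MulOpposite.op f) • m = cntr K C M f z

/-- An element `m` of a left `C*`-module is rational if the action of `C*` on it comes from
a "coaction" `ρ(m) = ∑ xᵢ ⊗ cᵢ ∈ M ⊗ C`, i.e. `f · m = ∑ f(cᵢ) xᵢ` for all `f ∈ C*`. -/
def IsRatLeft [Module (DualAlg K C) M] (m : M) : Prop :=
  ∃ z : M ⊗[K] C, ∀ f : DualAlg K C, f • m = cntr K C M f z

lemma cntr_mul_ract (g f : DualAlg K C) :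
    cntr K C M (g * f) = (cntr K C M f) ∘ₗ (TensorProduct.map LinearMap.id (ract K C g)) := by
  apply TensorProduct.ext'
  intro m c
  classical
  set r := Coalgebra.Repr.arbitrary K c
  simp only [LinearMap.coe_comp, Function.comp_apply, TensorProduct.map_tmul,
    LinearMap.id_coe, id_eq, cntr_tmul]
  congr 1
  rw [DualAlg.mul_repr _ _ _ r, ract_repr _ _ r]
  show _ = f.toLin _
  rw [map_sum]
  exact Finset.sum_congr rfl fun i _ => by
    rw [map_smul, smul_eq_mul, DualAlg.toLin_apply]

lemma cntr_mul_lact (f g : DualAlg K C) :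
    cntr K C M (f * g) = (cntr K C M f) ∘ₗ (TensorProduct.map LinearMap.id (lact K C g)) := by
  apply TensorProduct.ext'
  intro m c
  classical
  set r := Coalgebra.Repr.arbitrary K c
  simp only [LinearMap.coe_comp, Function.comp_apply, TensorProduct.map_tmul,
    LinearMap.id_coe, id_eq, cntr_tmul]
  congr 1
  rw [DualAlg.mul_repr _ _ _ r, lact_repr _ _ r]
  show _ = f.toLin _
  rw [map_sum]
  refine Finset.sum_congr rfl fun i _ => ?_
  rw [map_smul, smul_eq_mul, DualAlg.toLin_apply, mul_comm]

/-- `Rat(M)`, the largest rational submodule of a right `C*`-module `M`. -/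
def RatR [Module (DualAlg K C)ᵐᵒᵖ M] : Submodule (DualAlg K C)ᵐᵒᵖ M where
  carrier := {m | IsRatRight K C M m}
  zero_mem' := ⟨0, fun f => by simp⟩
  add_mem' := by
    rintro x y ⟨z, hz⟩ ⟨w, hw⟩
    exact ⟨z + w, fun f => by rw [smul_add, hz f, hw f, map_add]⟩
  smul_mem' := by
    rintro a m ⟨z, hz⟩
    refine ⟨(TensorProduct.map LinearMap.id (ract K C a.unop)) z, fun f => ?_⟩
    have h1 : (MulOpposite.op f) • a • m = (MulOpposite.op (a.unop * f)) • m := by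
      rw [MulOpposite.op_mul, mul_smul, MulOpposite.op_unop]
    rw [h1, hz (a.unop * f), cntr_mul_ract]
    rfl

/-- `Rat(M)`, the largest rational submodule of a left `C*`-module `M`. -/
def RatL [Module (DualAlg K C) M] : Submodule (DualAlg K C) M where
  carrier := {m | IsRatLeft K C M m}
  zero_mem' := ⟨0, fun f => by simp⟩
  add_mem' := by
    rintro x y ⟨z, hz⟩ ⟨w, hw⟩
    exact ⟨z + w, fun f => by rw [smul_add, hz f, hw f, map_add]⟩
  smul_mem' := by
    rintro g m ⟨z, hz⟩
    refine ⟨(TensorProduct.map LinearMap.id (lact K C g)) z, fun f => ?_⟩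
    rw [← mul_smul, hz (f * g), cntr_mul_lact]
    rfl

end Rational

section Comodules

variable (K C : Type) [Field K] [AddCommGroup C] [Module K C] [Coalgebra K C]

/-- A left `C`-comodule, viewed as a `K`-vector space together with a compatible rational
right `C*`-module structure. -/
structure LComod where
  M : Type
  [ab : AddCommGroup M]
  [modK : Module K M]
  [modD : Module (DualAlg K C)ᵐᵒᵖ M]
  compat : ∀ (k : K) (m : M), k • m = (MulOpposite.op (algebraMap K (DualAlg K C) k)) • m
  rat : ∀ m : M, IsRatRight K C M m

attribute [instance] LComod.ab LComod.modK LComod.modD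

/-- A right `C`-comodule, viewed as a `K`-vector space together with a compatible rational
left `C*`-module structure. -/
structure RComod where
  M : Type
  [ab : AddCommGroup M]
  [modK : Module K M]
  [modD : Module (DualAlg K C) M]
  compat : ∀ (k : K) (m : M), k • m = (algebraMap K (DualAlg K C) k) • m
  rat : ∀ m : M, IsRatLeft K C M m

attribute [instance] RComod.ab RComod.modK RComod.modD

variable {K C}

/-- A left comodule is simple if it is simple as a (rational) right `C*`-module. -/
def LComod.Simple (X : LComod K C) : Prop := IsSimpleModule (DualAlg K C)ᵐᵒᵖ X.M

/-- A right comodule is simple if it is simple as a (rational) left `C*`-module. -/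
def RComod.Simple (X : RComod K C) : Prop := IsSimpleModule (DualAlg K C) X.M

/-- A left comodule is an injective object if every comodule map into it extends along
monomorphisms of left comodules. -/
def LComod.InjectiveObj (E : LComod K C) : Prop :=
  ∀ (X Y : LComod K C) (i : X.M →ₗ[(DualAlg K C)ᵐᵒᵖ] Y.M), Function.Injective i →
    ∀ f : X.M →ₗ[(DualAlg K C)ᵐᵒᵖ] E.M, ∃ g : Y.M →ₗ[(DualAlg K C)ᵐᵒᵖ] E.M, g ∘ₗ i = f

/-- A right comodule is an injective object if every comodule map into it extends along
monomorphisms of right comodules. -/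
def RComod.InjectiveObj (E : RComod K C) : Prop :=
  ∀ (X Y : RComod K C) (i : X.M →ₗ[DualAlg K C] Y.M), Function.Injective i →
    ∀ f : X.M →ₗ[DualAlg K C] E.M, ∃ g : Y.M →ₗ[DualAlg K C] E.M, g ∘ₗ i = f

/-- `E` is an injective envelope of the left comodule `S`: `E` is injective and `S` embeds
in `E` as an essential subcomodule. -/
def LComod.IsInjEnvelopeOf (E S : LComod K C) : Prop :=
  E.InjectiveObj ∧ ∃ i : S.M →ₗ[(DualAlg K C)ᵐᵒᵖ] E.M, Function.Injective i ∧
    ∀ N : Submodule (DualAlg K C)ᵐᵒᵖ E.M, N ⊓ LinearMap.range i = ⊥ → N = ⊥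

/-- `E` is an injective envelope of the right comodule `S`: `E` is injective and `S` embeds
in `E` as an essential subcomodule. -/
def RComod.IsInjEnvelopeOf (E S : RComod K C) : Prop :=
  E.InjectiveObj ∧ ∃ i : S.M →ₗ[DualAlg K C] E.M, Function.Injective i ∧
    ∀ N : Submodule (DualAlg K C) E.M, N ⊓ LinearMap.range i = ⊥ → N = ⊥

variable (K C)

/-- A coalgebra is right semiperfect if the injective envelope of every simple left comodule
is finite dimensional. -/
def RightSemiperfect : Prop :=
  ∀ S E : LComod K C, S.Simple → E.IsInjEnvelopeOf S → FiniteDimensional K E.M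

/-- A coalgebra is left semiperfect if the injective envelope of every simple right comodule
is finite dimensional. -/
def LeftSemiperfect : Prop :=
  ∀ S E : RComod K C, S.Simple → E.IsInjEnvelopeOf S → FiniteDimensional K E.M

variable {K C}

instance (X : LComod K C) : SMulCommClass K (DualAlg K C)ᵐᵒᵖ X.M :=
  ⟨fun k a m => by
    rw [X.compat k m, X.compat k (a • m), ← mul_smul, ← mul_smul, ← MulOpposite.op_unop a,
      ← MulOpposite.op_mul, ← MulOpposite.op_mul, Algebra.commutes k (MulOpposite.unop a)]⟩

instance (X : RComod K C) : SMulCommClass K (DualAlg K C) X.M :=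
  ⟨fun k a m => by
    rw [X.compat k m, X.compat k (a • m), ← mul_smul, ← mul_smul, Algebra.commutes k a]⟩

end Comodules

section DualModules

variable {K C : Type} [Field K] [AddCommGroup C] [Module K C] [Coalgebra K C]
variable (M : Type) [AddCommGroup M] [Module K M]

/-- The action of an element of (the opposite of) the dual algebra as a `K`-linear map. -/
def opSmulLin [Module (DualAlg K C)ᵐᵒᵖ M] [SMulCommClass K (DualAlg K C)ᵐᵒᵖ M]
    (a : (DualAlg K C)ᵐᵒᵖ) : M →ₗ[K] M where
  toFun m := a • m
  map_add' := smul_add a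
  map_smul' k m := (smul_comm k a m).symm

/-- The action of an element of the dual algebra as a `K`-linear map. -/
def smulLin [Module (DualAlg K C) M] [SMulCommClass K (DualAlg K C) M]
    (a : DualAlg K C) : M →ₗ[K] M where
  toFun m := a • m
  map_add' := smul_add a
  map_smul' k m := (smul_comm k a m).symm

/-- The `K`-linear dual of a right `C*`-module is a left `C*`-module via `(g·φ)(m) = φ(m·g)`. -/
instance dualModuleLeft [Module (DualAlg K C)ᵐᵒᵖ M] [SMulCommClass K (DualAlg K C)ᵐᵒᵖ M] :
    Module (DualAlg K C) (Module.Dual K M) where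
  smul g φ := φ ∘ₗ opSmulLin M (MulOpposite.op g)
  one_smul φ := by ext m; show φ ((MulOpposite.op (1 : DualAlg K C)) • m) = φ m; simp
  mul_smul g h φ := by
    ext m
    show φ ((MulOpposite.op (g * h)) • m) = φ ((MulOpposite.op h) • (MulOpposite.op g) • m)
    rw [← mul_smul, MulOpposite.op_mul]
  smul_zero g := by ext m; rfl
  smul_add g φ ψ := by ext m; rfl
  add_smul g h φ := by
    ext m
    show φ ((MulOpposite.op (g + h)) • m) = φ (MulOpposite.op g • m) + φ (MulOpposite.op h • m)
    rw [show MulOpposite.op (g + h) = MulOpposite.op g + MulOpposite.op h from rfl, add_smul,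
      map_add]
  zero_smul φ := by
    ext m
    show φ ((MulOpposite.op (0 : DualAlg K C)) • m) = 0
    rw [show MulOpposite.op (0 : DualAlg K C) = 0 from rfl, zero_smul, map_zero]

/-- The `K`-linear dual of a left `C*`-module is a right `C*`-module via `(φ·f)(m) = φ(f·m)`. -/
instance dualModuleRight [Module (DualAlg K C) M] [SMulCommClass K (DualAlg K C) M] :
    Module (DualAlg K C)ᵐᵒᵖ (Module.Dual K M) where
  smul a φ := φ ∘ₗ smulLin M a.unop
  one_smul φ := by ext m; show φ ((1 : DualAlg K C) • m) = φ m; simp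
  mul_smul a b φ := by
    ext m
    show φ ((b.unop * a.unop) • m) = φ (b.unop • a.unop • m)
    rw [← mul_smul]
  smul_zero g := by ext m; rfl
  smul_add g φ ψ := by ext m; rfl
  add_smul a b φ := by
    ext m
    show φ ((a.unop + b.unop) • m) = φ (a.unop • m) + φ (b.unop • m)
    rw [add_smul, map_add]
  zero_smul φ := by
    ext m
    show φ ((0 : DualAlg K C) • m) = 0
    rw [zero_smul, map_zero]

end DualModules

section Hopf

variable (K H : Type) [Field K] [Ring H] [HopfAlgebra K H]

/-- The space of left integrals of a Hopf algebra: those `t ∈ H*` with `α * t = α(1) t`. -/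
def leftIntegrals : Submodule K (DualAlg K H) where
  carrier := {t | ∀ a : DualAlg K H, a * t = a (1 : H) • t}
  zero_mem' := by intro a; simp
  add_mem' := by intro x y hx hy a; rw [mul_add, hx a, hy a, smul_add]
  smul_mem' := by intro k x hx a; rw [mul_smul_comm, hx a, smul_comm]

/-- The space of right integrals of a Hopf algebra: those `t ∈ H*` with `t * α = α(1) t`. -/
def rightIntegrals : Submodule K (DualAlg K H) where
  carrier := {t | ∀ a : DualAlg K H, t * a = a (1 : H) • t}
  zero_mem' := by intro a; simp
  add_mem' := by intro x y hx hy a; rw [add_mul, hx a, hy a, smul_add]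
  smul_mem' := by intro k x hx a; rw [smul_mul_assoc, hx a, smul_comm]

/-- `x ↦ x ⇀ t`, i.e. `(x ⇀ t)(y) = t(yx)`, as a linear map `H → H*`. -/
def intMap (t : DualAlg K H) : H →ₗ[K] DualAlg K H where
  toFun x := DualAlg.ofLin (t.toLin ∘ₗ LinearMap.mulRight K x)
  map_add' x y := by
    apply DualAlg.ext; intro z
    show t.toLin (z * (x + y)) = t.toLin (z * x) + t.toLin (z * y)
    rw [mul_add, map_add]
  map_smul' k x := by
    apply DualAlg.ext; intro z
    show t.toLin (z * (k • x)) = k * t.toLin (z * x)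
    rw [mul_smul_comm, map_smul, smul_eq_mul]

/-- The twisted left coaction `x ↦ a S(x₂) ⊗ x₁` on `H`, for `a ∈ H`. -/
def aCoaction (a : H) : H →ₗ[K] H ⊗[K] H :=
  (TensorProduct.map ((LinearMap.mulLeft K a) ∘ₗ (HopfAlgebra.antipode (R := K))) LinearMap.id)
    ∘ₗ (TensorProduct.comm K H H).toLinearMap ∘ₗ Coalgebra.comul

/-- The right `H*`-action on `ᵃH` associated to the twisted coaction `x ↦ a S(x₂) ⊗ x₁`:
`x · f = f(a S(x₂)) x₁`. -/
def aAction (a : H) (f : DualAlg K H) : H →ₗ[K] H :=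
  (TensorProduct.lid K H).toLinearMap ∘ₗ (f.toLin.rTensor H) ∘ₗ aCoaction K H a

end Hopf

/-! The nonzero left integral `t = φ 1` coming from a left co-Frobenius embedding `φ : H → H*`
satisfies `∑ t(h₂ a) S(h₁) = ∑ t(h a₂) a₁`. From this identity, the pairing `(y, x) ↦ t(y x)` is
nondegenerate in `x`: its kernel is a left ideal `J` with `Δ J ⊆ H ⊗ J`, and `ε` vanishes on `J`
because `ε(x) 1 = ∑ S(x₁) x₂ ∈ J` while `t ≠ 0`.

Surjectivity: given `a`, nondegeneracy yields `h` with `t(h a₂) = ε(a₂)` for the finitely many `a₂`,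
and then the identity shows `S(∑ t(h₂ a) h₁) = a`. Injectivity: as `S` is anti-comultiplicative,
the mirrored identity `∑ t(y S(x₁)) x₂ = ∑ t(y₂ S(x)) y₁` holds, so if `S x = 0` then
`Δ x ∈ ker S ⊗ H`, and `ε = ε ∘ S` vanishes on `ker S`, forcing `x = 0`. -/

open WithConv HopfAlgebra

section LinearAlgebra

variable {K V W : Type*} [Field K] [AddCommGroup V] [Module K V] [AddCommGroup W] [Module K W]

theorem TensorProduct.mem_range_lTensor_subtype_of_forall_dual (N : Submodule K W) {z : V ⊗[K] W}
    (hz : ∀ f : Module.Dual K V, TensorProduct.lid K W (f.rTensor W z) ∈ N) :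
    z ∈ range (N.subtype.lTensor V) := by
  classical
  let b := Module.Basis.ofVectorSpace K V
  obtain ⟨c, rfl⟩ := TensorProduct.eq_repr_basis_left b z
  have hc (i) : c i ∈ N := by
    by_cases hi : c i = 0
    · simp [hi]
    · simpa [Finsupp.sum, map_sum, Finsupp.single_apply, hi] using hz (b.coord i)
  exact ⟨c.sum fun i _ => b i ⊗ₜ ⟨c i, hc i⟩, by simp [Finsupp.sum, map_sum]⟩

theorem TensorProduct.mem_range_rTensor_subtype_of_forall_dual (N : Submodule K V) {z : V ⊗[K] W}
    (hz : ∀ f : Module.Dual K W, TensorProduct.rid K V (f.lTensor V z) ∈ N) :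
    z ∈ range (N.subtype.rTensor W) := by
  obtain ⟨y, hy⟩ := mem_range_lTensor_subtype_of_forall_dual N (z := TensorProduct.comm K V W z)
    fun f => by simpa [rTensor_comm] using hz f
  exact ⟨TensorProduct.comm K W N y, by simp [rTensor_comm, hy]⟩

theorem LinearMap.SeparatingRight.exists_forall_mem_apply_eq {B : V →ₗ[K] W →ₗ[K] K}
    (hB : B.SeparatingRight) (f : Module.Dual K W) {ι : Type*} (s : Finset ι) (w : ι → W) :
    ∃ v, ∀ i ∈ s, B v (w i) = f (w i) := by
  let W' := Submodule.span K (w '' s)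
  have : FiniteDimensional K W' := FiniteDimensional.span_of_finite K (s.finite_toSet.image w)
  let Φ : V →ₗ[K] Module.Dual K W' := W'.subtype.dualMap ∘ₗ B
  have hΦ : range Φ = ⊤ := by
    have : (range Φ).dualCoannihilator = ⊥ := (Submodule.eq_bot_iff _).mpr fun w hw =>
      Subtype.ext (hB w fun v => (Submodule.mem_dualCoannihilator w).mp hw _ ⟨v, rfl⟩)
    rw [← Subspace.dualCoannihilator_dualAnnihilator_eq (W := range Φ), this,
      Submodule.dualAnnihilator_bot]
  obtain ⟨v, hv⟩ : f.domRestrict W' ∈ range Φ := hΦ ▸ Submodule.mem_top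
  exact ⟨v, fun i hi => LinearMap.congr_fun hv ⟨w i, Submodule.subset_span ⟨i, hi, rfl⟩⟩⟩

end LinearAlgebra

section Coalgebra

variable {R A : Type*} [CommSemiring R] [AddCommMonoid A] [Module R A] [Coalgebra R A]

theorem Coalgebra.sum_counit_right_smul {a : A} {ι : Type*} (r : Coalgebra.Repr R a ι) :
    ∑ i ∈ r.index, counit (R := R) (r.right i) • r.left i = a := by
  have h := congrArg (_root_.TensorProduct.rid R A) (sum_tmul_counit_eq r)
  simp only [map_sum, rid_tmul, one_smul] at h
  exact h

theorem Coalgebra.eq_zero_of_comul_mem_range_lTensor {N : Submodule R A}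
    (hN : ∀ n ∈ N, counit (R := R) n = 0) {a : A} (ha : comul a ∈ range (N.subtype.lTensor A)) :
    a = 0 := by
  obtain ⟨z, hz⟩ := ha
  have : counit ∘ₗ N.subtype = 0 := LinearMap.ext fun n => hN n n.2
  calc a = _root_.TensorProduct.rid R A ((counit (R := R)).lTensor A (comul a)) := by simp
    _ = 0 := by rw [← hz, ← LinearMap.lTensor_comp_apply, this, lTensor_zero]; simp

theorem Coalgebra.eq_zero_of_comul_mem_range_rTensor {N : Submodule R A}
    (hN : ∀ n ∈ N, counit (R := R) n = 0) {a : A} (ha : comul a ∈ range (N.subtype.rTensor A)) :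
    a = 0 := by
  obtain ⟨z, hz⟩ := ha
  have : counit ∘ₗ N.subtype = 0 := LinearMap.ext fun n => hN n n.2
  calc a = _root_.TensorProduct.lid R A ((counit (R := R)).rTensor A (comul a)) := by simp
    _ = 0 := by rw [← hz, ← LinearMap.rTensor_comp_apply, this, rTensor_zero]; simp

end Coalgebra

section HopfAlgebra

variable {R A : Type*} [CommSemiring R] [Semiring A] [HopfAlgebra R A]

lemma LinearMap.algHom_comp_antipode_mul {B : Type*} [Semiring B] [Algebra R B] (h : A →ₐ[R] B) :
    toConv (h.toLinearMap ∘ₗ antipode R) * toConv h.toLinearMap = 1 := by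
  ext x
  simp [(ℛ R x).convMul_apply, ← map_mul, ← map_sum, sum_antipode_mul_eq_algebraMap_counit]

/- In the convolution algebra `Hom(A, A ⊗ A)` we have `Δ = iL * iR` and
`(S ⊗ S) ∘ τ ∘ Δ = (iR ∘ S) * (iL ∘ S)` for the inclusions `iL, iR : A → A ⊗ A`; the latter is
therefore a left inverse of `Δ`, whose right inverse is `Δ ∘ S`. -/
theorem HopfAlgebra.comul_antipode (a : A) :
    comul (R := R) (antipode R a) =
      map (antipode R) (antipode R) (TensorProduct.comm R A A (comul a)) := by
  let iL : A →ₐ[R] A ⊗[R] A := Algebra.TensorProduct.includeLeft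
  let iR : A →ₐ[R] A ⊗[R] A := Algebra.TensorProduct.includeRight
  let G : A →ₗ[R] A ⊗[R] A :=
    map (antipode R) (antipode R) ∘ₗ (TensorProduct.comm R A A).toLinearMap ∘ₗ comul
  have hcomul : toConv (comul (R := R) (A := A)) = toConv iL.toLinearMap * toConv iR.toLinearMap := by
    ext x
    simp [(ℛ R x).convMul_apply, iL, iR, ← (ℛ R x).eq]
  have hG : toConv G = toConv (iR.toLinearMap ∘ₗ antipode R) * toConv (iL.toLinearMap ∘ₗ antipode R) := by
    ext x
    simp [(ℛ R x).convMul_apply, G, iL, iR, ← (ℛ R x).eq]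
  have hinv : toConv G * toConv (comul (R := R) (A := A)) = 1 := by
    rw [hG, hcomul, mul_assoc, ← mul_assoc (toConv (iL.toLinearMap ∘ₗ antipode R)),
      algHom_comp_antipode_mul, one_mul, algHom_comp_antipode_mul]
  exact (LinearMap.congr_fun (congrArg ofConv (left_inv_eq_right_inv hinv comul_right_inv)) a).symm

def Coalgebra.Repr.antipode {a : A} {ι : Type*} (r : Coalgebra.Repr R a ι) :
    Coalgebra.Repr R (antipode R a) ι where
  index := r.index
  left i := HopfAlgebra.antipode R (r.right i)
  right i := HopfAlgebra.antipode R (r.left i)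
  eq := by rw [comul_antipode, ← r.eq]; simp [map_sum]

end HopfAlgebra

instance {K C : Type} [Field K] [AddCommGroup C] [Module K C] :
    LinearMapClass (DualAlg K C) K C K where
  map_add f := f.toLin.map_add
  map_smulₛₗ f := f.toLin.map_smul

section LeftIntegral

variable {K H : Type} [Field K] [Ring H] [HopfAlgebra K H] {t : DualAlg K H}

local notation "𝑰" => toConv (LinearMap.id : H →ₗ[K] H)
local notation "𝑺" => toConv (antipode K : H →ₗ[K] H)

theorem exists_ne_zero_mem_leftIntegrals (h : LeftCoFrobenius K H) :
    ∃ t ∈ leftIntegrals K H, t ≠ 0 := by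
  obtain ⟨φ, hφ⟩ := h
  have : Nontrivial H := Bialgebra.nontrivial K
  refine ⟨φ 1, fun a => ?_, (map_ne_zero_iff φ hφ).mpr one_ne_zero⟩
  have ha : a • (1 : H) = a 1 • (1 : H) := by
    simp [smul_def', lact, Algebra.TensorProduct.one_def]
  rw [← smul_eq_mul, ← map_smul, ha, map_smul_of_tower]

theorem sum_smul_left_eq_of_mem_leftIntegrals (ht : t ∈ leftIntegrals K H) {x : H} {ι : Type*}
    (r : Coalgebra.Repr K x ι) : ∑ i ∈ r.index, t (r.right i) • r.left i = t x • (1 : H) := by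
  rw [← sub_eq_zero, ← Module.forall_dual_apply_eq_zero_iff K]
  intro φ
  have := DFunLike.congr_fun (ht (DualAlg.ofLin φ)) x
  rw [DualAlg.mul_repr _ _ _ r] at this
  simpa [mul_comm, sub_eq_zero] using this

/- With `Q w := t(· w) • 1`, the integral property of `h a` reads `∑ (𝑰 * Q a₂) h * a₁ = t(h a) • 1`,
and `𝑺 * 𝑰 = 1` cancels the `𝑰`. -/
theorem sum_smul_antipode_eq_of_mem_leftIntegrals (ht : t ∈ leftIntegrals K H) (h a : H)
    {ι κ : Type*} (rh : Coalgebra.Repr K h ι) (ra : Coalgebra.Repr K a κ) :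
    ∑ k ∈ rh.index, t (rh.right k * a) • antipode K (rh.left k) =
      ∑ i ∈ ra.index, t (h * ra.right i) • ra.left i := by
  let Q (w : H) : WithConv (H →ₗ[K] H) := toConv ((t.toLin ∘ₗ mulRight K w).smulRight 1)
  have hQ (u : H) : ∑ i ∈ ra.index, (𝑰 * Q (ra.right i)) u * ra.left i = t (u * a) • (1 : H) := by
    rw [← sum_smul_left_eq_of_mem_leftIntegrals ht ((ℛ K u).mul ra)]
    simp [(ℛ K u).convMul_apply, Q, Finset.sum_mul, Finset.sum_product_right]
  calc ∑ k ∈ rh.index, t (rh.right k * a) • antipode K (rh.left k)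
      = ∑ k ∈ rh.index, antipode K (rh.left k) *
          ∑ i ∈ ra.index, (𝑰 * Q (ra.right i)) (rh.right k) * ra.left i := by
        simp only [hQ, mul_smul_comm, mul_one]
    _ = ∑ i ∈ ra.index, (𝑺 * (𝑰 * Q (ra.right i))) h * ra.left i := by
        simp only [rh.convMul_apply, Finset.mul_sum, Finset.sum_mul, mul_assoc]
        exact Finset.sum_comm
    _ = ∑ i ∈ ra.index, t (h * ra.right i) • ra.left i := by
        simp [← mul_assoc, Q]

theorem sum_mul_antipode_smul_eq_of_mem_leftIntegrals (ht : t ∈ leftIntegrals K H) (y x : H)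
    {ι κ : Type*} (ry : Coalgebra.Repr K y ι) (rx : Coalgebra.Repr K x κ) :
    ∑ k ∈ rx.index, t (y * antipode K (rx.left k)) • rx.right k =
      ∑ j ∈ ry.index, t (ry.right j * antipode K x) • ry.left j := by
  let Q (w : H) : WithConv (H →ₗ[K] H) :=
    toConv ((t.toLin ∘ₗ mulLeft K w ∘ₗ antipode K).smulRight 1)
  have hQ (u : H) :
      ∑ j ∈ ry.index, ry.left j * (Q (ry.right j) * 𝑺) u = t (y * antipode K u) • (1 : H) := by
    rw [← sum_smul_left_eq_of_mem_leftIntegrals ht (ry.mul (ℛ K u).antipode)]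
    simp [(ℛ K u).convMul_apply, Q, Finset.mul_sum, Finset.sum_product, Coalgebra.Repr.antipode]
  calc ∑ k ∈ rx.index, t (y * antipode K (rx.left k)) • rx.right k
      = ∑ k ∈ rx.index,
          (∑ j ∈ ry.index, ry.left j * (Q (ry.right j) * 𝑺) (rx.left k)) * rx.right k := by
        simp only [hQ, smul_mul_assoc, one_mul]
    _ = ∑ j ∈ ry.index, ry.left j * (Q (ry.right j) * 𝑺 * 𝑰) x := by
        simp only [rx.convMul_apply]
        simp only [Finset.mul_sum, Finset.sum_mul, mul_assoc]
        exact Finset.sum_comm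
    _ = ∑ j ∈ ry.index, t (ry.right j * antipode K x) • ry.left j := by
        simp [mul_assoc, Q]

theorem separatingRight_of_mem_leftIntegrals (ht : t ∈ leftIntegrals K H) (ht0 : t ≠ 0) :
    ((LinearMap.mul K H).compr₂ t.toLin).SeparatingRight := by
  let J := LinearMap.ker ((LinearMap.mul K H).compr₂ t.toLin).flip
  have mem_J {x : H} : x ∈ J ↔ ∀ y, t (y * x) = 0 := by simp [J, LinearMap.ext_iff]
  have comul_mem {x : H} (hx : x ∈ J) : comul x ∈ range (J.subtype.lTensor H) :=
    mem_range_lTensor_subtype_of_forall_dual J fun f => mem_J.2 fun y => by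
      have := congrArg f (sum_smul_antipode_eq_of_mem_leftIntegrals ht y x (ℛ K y) (ℛ K x))
      rw [← (ℛ K x).eq]
      simpa [mem_J.1 hx, Finset.mul_sum, mul_comm] using this.symm
  have mul_mem (w : H ⊗[K] J) :
      mul' K H (rTensor H (antipode K) (J.subtype.lTensor H w)) ∈ J := by
    induction w using TensorProduct.induction_on with
    | zero => simp
    | tmul u j => simpa [mem_J, ← mul_assoc] using fun y => mem_J.1 j.2 (y * antipode K u)
    | add w₁ w₂ h₁ h₂ => simpa using J.add_mem h₁ h₂
  have counit_eq_zero (x : H) (hx : x ∈ J) : counit (R := K) x = 0 := by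
    obtain ⟨z, hz⟩ := comul_mem hx
    have hJ : algebraMap K H (counit x) ∈ J := by
      rw [← mul_antipode_rTensor_comul_apply, ← hz]
      exact mul_mem z
    obtain ⟨y, hy⟩ : ∃ y, t y ≠ 0 := by simpa [DFunLike.ext_iff] using ht0
    simpa [Algebra.commutes, Algebra.algebraMap_eq_smul_one, hy] using mem_J.1 hJ y
  exact fun x hx => Coalgebra.eq_zero_of_comul_mem_range_lTensor counit_eq_zero
    (comul_mem (mem_J.2 fun y => by simpa using hx y))

theorem antipode_surjective_of_mem_leftIntegrals (ht : t ∈ leftIntegrals K H) (ht0 : t ≠ 0) :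
    Function.Surjective (antipode K : H →ₗ[K] H) := by
  intro a
  let ra := ℛ K a
  obtain ⟨h, hh⟩ := (separatingRight_of_mem_leftIntegrals ht ht0).exists_forall_mem_apply_eq
    counit ra.index ra.right
  refine ⟨∑ k ∈ (ℛ K h).index, t ((ℛ K h).right k * a) • (ℛ K h).left k, ?_⟩
  simp only [map_sum, map_smul]
  rw [sum_smul_antipode_eq_of_mem_leftIntegrals ht h a (ℛ K h) ra]
  conv_rhs => rw [← Coalgebra.sum_counit_right_smul ra]
  exact Finset.sum_congr rfl fun i hi => by simpa using congrArg (· • ra.left i) (hh i hi)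

theorem antipode_injective_of_mem_leftIntegrals (ht : t ∈ leftIntegrals K H) (ht0 : t ≠ 0) :
    Function.Injective (antipode K : H →ₗ[K] H) := by
  refine (injective_iff_map_eq_zero _).2 fun x hx => ?_
  have hsep := separatingRight_of_mem_leftIntegrals ht ht0
  refine Coalgebra.eq_zero_of_comul_mem_range_rTensor (N := ker (antipode K : H →ₗ[K] H))
    (fun n hn => by rw [← counit_antipode, mem_ker.1 hn, map_zero]) ?_
  refine mem_range_rTensor_subtype_of_forall_dual _ fun g => mem_ker.2 (hsep _ fun y => ?_)
  have := congrArg g (sum_mul_antipode_smul_eq_of_mem_leftIntegrals ht y x (ℛ K y) (ℛ K x))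
  rw [← (ℛ K x).eq]
  simpa [hx, Finset.mul_sum, mul_comm] using this

end LeftIntegral

variable (K H : Type) [Field K] [Ring H] [HopfAlgebra K H]

/-- The antipode of a co-Frobenius Hopf algebra is bijective. -/
theorem antipode_bijective_of_coFrobenius (h : IsCoFrobenius K H) :
    Function.Bijective (HopfAlgebra.antipode (R := K) (A := H)) := by
  obtain ⟨t, ht, ht0⟩ := exists_ne_zero_mem_leftIntegrals h.1
  exact ⟨antipode_injective_of_mem_leftIntegrals ht ht0,
    antipode_surjective_of_mem_leftIntegrals ht ht0⟩
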